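/- arXiv:2405.01275 — 2 statements merged into one kernel-verified Lean document; each statement's English description precedes it below -/
import Mathlib

section
/- Let ρ: [0,∞) → [0,∞) be nondecreasing and concave with ρ(0) = 0, differentiable on (0,∞). Then for any vectors β, β' ∈ ℝ^s with min_j |β_j| ≥ d and ‖β' − β‖_2 ≤ γ where γ < d, one has |∑_j ρ(|β'_j|) − ∑_j ρ(|β_j|)| ≤ √s · γ · ρ'(d − γ). -/
/-!
On `[c, ∞)` with `c > 0` a nondecreasing concave `ρ` is Lipschitz with constant `ρ'(c)`: its
secant slopes are squeezed between `0` and the derivative at the left endpoint, and `ρ'` is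
nonincreasing. Every coordinate of `β` and `β'` lies in `[d - γ, ∞)` in absolute value, so the
change of the penalty is at most `ρ'(d - γ) · ‖β' - β‖₁ ≤ ρ'(d - γ) · √s · ‖β' - β‖₂`.
-/

open Set

namespace ConcaveOn

variable {S : Set ℝ} {f : ℝ → ℝ} {x y : ℝ}

theorem sub_le_deriv_mul_sub (hfc : ConcaveOn ℝ S f) (hx : x ∈ S) (hy : y ∈ S) (hxy : x ≤ y)
    (hfd : DifferentiableAt ℝ f x) : f y - f x ≤ deriv f x * (y - x) := by
  rcases hxy.eq_or_lt with rfl | hxy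
  · simp
  have := hfc.slope_le_deriv hx hy hxy hfd
  rwa [slope_def_field, div_le_iff₀ (sub_pos.2 hxy)] at this

theorem deriv_nonneg_of_monotoneOn (hfc : ConcaveOn ℝ S f) (hf : MonotoneOn f S) (hx : x ∈ S)
    (hy : y ∈ S) (hxy : x < y) (hfd : DifferentiableAt ℝ f x) : 0 ≤ deriv f x :=
  (hf.slope_nonneg hx hy).trans (hfc.slope_le_deriv hx hy hxy hfd)

theorem abs_sub_le_deriv_mul_abs_sub (hfc : ConcaveOn ℝ S f) (hf : MonotoneOn f S)
    (hfd : ∀ z ∈ S, DifferentiableAt ℝ f z) {c : ℝ} (hc : c ∈ S) (hx : x ∈ S) (hy : y ∈ S)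
    (hcx : c ≤ x) (hcy : c ≤ y) : |f x - f y| ≤ deriv f c * |x - y| := by
  wlog hxy : x ≤ y generalizing x y
  · rw [abs_sub_comm, abs_sub_comm x]
    exact this hy hx hcy hcx (le_of_not_ge hxy)
  rw [abs_sub_comm, abs_of_nonneg (sub_nonneg.2 (hf hx hy hxy)), abs_sub_comm,
    abs_of_nonneg (sub_nonneg.2 hxy)]
  calc f y - f x ≤ deriv f x * (y - x) := hfc.sub_le_deriv_mul_sub hx hy hxy (hfd x hx)
    _ ≤ deriv f c * (y - x) :=
      mul_le_mul_of_nonneg_right (hfc.antitoneOn_deriv hfd hc hx hcx) (sub_nonneg.2 hxy)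

end ConcaveOn

theorem Real.sum_abs_le_sqrt_card_mul_sqrt_sum_sq {ι : Type*} (s : Finset ι) (x : ι → ℝ) :
    ∑ i ∈ s, |x i| ≤ √(s.card : ℝ) * √(∑ i ∈ s, x i ^ 2) := by
  simpa using Real.sum_mul_le_sqrt_mul_sqrt s (fun _ ↦ 1) (fun i ↦ |x i|)

theorem Real.abs_le_sqrt_sum_sq {ι : Type*} [Fintype ι] (x : ι → ℝ) (j : ι) :
    |x j| ≤ √(∑ i, x i ^ 2) :=
  Real.abs_le_sqrt (Finset.single_le_sum (fun i _ ↦ sq_nonneg (x i)) (Finset.mem_univ j))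

theorem penalty_perturbation_bound_general
    (ρ : ℝ → ℝ) (hmono : MonotoneOn ρ (Ici 0))
    (hconc : ConcaveOn ℝ (Ici 0) ρ)
    (hdiff : ∀ x : ℝ, 0 < x → DifferentiableAt ℝ ρ x)
    (s : ℕ) (β β' : Fin s → ℝ) (d γ : ℝ) (hγd : γ < d)
    (hβ : ∀ j, d ≤ |β j|)
    (hclose : Real.sqrt (∑ j, (β' j - β j) ^ 2) ≤ γ) :
    abs ((∑ j, ρ (|β' j|)) - ∑ j, ρ (|β j|)) ≤ Real.sqrt s * γ * deriv ρ (d - γ) := by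
  have hconc' := hconc.subset Ioi_subset_Ici_self (convex_Ioi 0)
  have hmono' := hmono.mono Ioi_subset_Ici_self
  have hc : 0 < d - γ := sub_pos.2 hγd
  have hγ0 : 0 ≤ γ := (Real.sqrt_nonneg _).trans hclose
  have hβc (j : Fin s) : d - γ ≤ |β j| := by linarith [hβ j]
  have hβ'c (j : Fin s) : d - γ ≤ |β' j| := by
    have : |β' j - β j| ≤ γ := (Real.abs_le_sqrt_sum_sq (fun i ↦ β' i - β i) j).trans hclose
    linarith [hβ j, abs_sub_abs_le_abs_sub (β j) (β' j), abs_sub_comm (β j) (β' j)]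
  have hderiv : 0 ≤ deriv ρ (d - γ) :=
    hconc'.deriv_nonneg_of_monotoneOn hmono' hc (hc.trans (lt_add_one _)) (lt_add_one _)
      (hdiff _ hc)
  have hlip (j : Fin s) : |ρ (|β' j|) - ρ (|β j|)| ≤ deriv ρ (d - γ) * |β' j - β j| :=
    (hconc'.abs_sub_le_deriv_mul_abs_sub hmono' hdiff hc (hc.trans_le (hβ'c j))
      (hc.trans_le (hβc j)) (hβ'c j) (hβc j)).trans
      (mul_le_mul_of_nonneg_left (abs_abs_sub_abs_le_abs_sub _ _) hderiv)
  have hl1 : ∑ j, |β' j - β j| ≤ Real.sqrt s * γ := by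
    simpa using (Real.sum_abs_le_sqrt_card_mul_sqrt_sum_sq Finset.univ (fun j ↦ β' j - β j)).trans
      (mul_le_mul_of_nonneg_left hclose (Real.sqrt_nonneg _))
  calc |(∑ j, ρ (|β' j|)) - ∑ j, ρ (|β j|)|
      = |∑ j, (ρ (|β' j|) - ρ (|β j|))| := by rw [Finset.sum_sub_distrib]
    _ ≤ ∑ j, |ρ (|β' j|) - ρ (|β j|)| := Finset.abs_sum_le_sum_abs _ _
    _ ≤ ∑ j, deriv ρ (d - γ) * |β' j - β j| := Finset.sum_le_sum fun j _ ↦ hlip j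
    _ = deriv ρ (d - γ) * ∑ j, |β' j - β j| := (Finset.mul_sum _ _ _).symm
    _ ≤ deriv ρ (d - γ) * (Real.sqrt s * γ) := mul_le_mul_of_nonneg_left hl1 hderiv
    _ = Real.sqrt s * γ * deriv ρ (d - γ) := mul_comm _ _

/-- Penalty perturbation bound: for a nondecreasing concave penalty `ρ` with `ρ 0 = 0`,
differentiable on `(0, ∞)`, and vectors `β, β'` with `min_j |β j| ≥ d` and
`‖β' - β‖₂ ≤ γ < d`, one has
`|∑ ρ(|β' j|) - ∑ ρ(|β j|)| ≤ √s · γ · ρ'(d - γ)`. -/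
theorem penalty_perturbation_bound
    (ρ : ℝ → ℝ) (hρ0 : ρ 0 = 0) (hmono : MonotoneOn ρ (Ici 0))
    (hconc : ConcaveOn ℝ (Ici 0) ρ)
    (hdiff : ∀ x : ℝ, 0 < x → DifferentiableAt ℝ ρ x)
    (s : ℕ) (β β' : Fin s → ℝ) (d γ : ℝ) (hd : 0 < d) (hγ0 : 0 ≤ γ) (hγd : γ < d)
    (hβ : ∀ j, d ≤ |β j|)
    (hclose : Real.sqrt (∑ j, (β' j - β j) ^ 2) ≤ γ) :
    abs ((∑ j, ρ (|β' j|)) - ∑ j, ρ (|β j|)) ≤ Real.sqrt s * γ * deriv ρ (d - γ) :=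
  penalty_perturbation_bound_general ρ hmono hconc hdiff s β β' d γ hγd hβ hclose
end

section
/- Let F: ℝ^p → ℝ be given by F(β) = L(β) − ∑_{j=1}^p ρ_θ(|β_j|) where L is twice continuously differentiable and concave-type conditions hold on the support: if β̂ with support S = {1,...,s} satisfies (i) ∂_j F exists and is 0 for j ∈ S, (ii) |∂_j L(β̂)| < θ ρ'(0+) for j ∉ S, and (iii) the restriction of F to the subspace {β: β_j = 0, j ∉ S} has negative definite Hessian at β̂ (i.e., λ_min(−∇²_{SS} L(β̂)) > θ κ with θκ ≥ sup of penalty curvature on a neighborhood), then β̂ is a strict local maximizer of F on ℝ^p. -/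
/-!
Write `β = βS + βO` with `βS` the restriction of `β` to the support `S` of `β̂`.

Off the support, the mean value theorem gives `L β - L βS = ∑_{j ∉ S} β_j ∂_j L(ξ)`, and near `β̂`
every `|∂_j L(ξ)|`, `j ∉ S`, stays below a constant `c < θ ρ'(0+)`, while `θ ρ(t) ≥ c t` for small
`t ≥ 0`. Hence `F β < F βS` as soon as `βO ≠ 0`.

On the support no coordinate changes sign, so along the segment from `β̂` to `βS` the objective
is `g t = L(β̂ + t v) - ∑ θ ρ(|β̂_j| + t d_j)` with `v = βS - β̂`, `d_j = |βS_j| - |β̂_j|`. The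
first-order condition gives `g' 0 = 0`, and `τ (g' τ - g' 0)` splits into a gradient increment of
`L`, at most `-μ ∑ (τ v_j)²` for a fixed `μ ∈ (θ κ, λ)` by continuity of the Hessian, and a
penalty increment, at most `θ κ ∑ (τ v_j)²` by the curvature bound. So `g' < 0` on `(0, 1)`,
and `F βS = g 1 < g 0 = F β̂` unless `βS = β̂`.
-/

open Set Filter Topology

theorem eventually_mul_le_of_tendsto_deriv {ρ : ℝ → ℝ} (hρ0 : ρ 0 = 0)
    (hmono : MonotoneOn ρ (Ici 0)) (hdiff : ∀ x : ℝ, 0 < x → DifferentiableAt ℝ ρ x)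
    {ρ0' c : ℝ} (hρ0' : Tendsto (deriv ρ) (𝓝[>] 0) (𝓝 ρ0')) (hc : c < ρ0') :
    ∀ᶠ t in 𝓝[≥] 0, c * t ≤ ρ t := by
  obtain ⟨δ, hδ, hderiv⟩ := mem_nhdsGT_iff_exists_Ioo_subset.1
    (hρ0'.eventually (eventually_ge_nhds hc))
  have hslope : ∀ u ∈ Ioo 0 δ, ∀ t ∈ Ioo 0 δ, u ≤ t → c * (t - u) ≤ ρ t - ρ u :=
    (convex_Ioo 0 δ).mul_sub_le_image_sub_of_le_deriv
      (fun x hx => (hdiff x hx.1).continuousAt.continuousWithinAt)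
      (fun x hx => (hdiff x (interior_subset hx).1).differentiableWithinAt)
      (fun x hx => hderiv (interior_subset hx))
  filter_upwards [Ico_mem_nhdsGE hδ] with t ⟨ht0, htδ⟩
  rcases ht0.eq_or_lt with rfl | ht0
  · simp [hρ0]
  -- `ρ` need not be continuous at `0`, so let the left endpoint `u` tend to `0` instead.
  have hlim : Tendsto (fun u => c * (t - u)) (𝓝[>] 0) (𝓝 (c * t)) :=
    ((continuous_const.mul (continuous_const.sub continuous_id)).tendsto' 0 _
      (by simp)).mono_left nhdsWithin_le_nhds
  refine le_of_tendsto hlim ?_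
  filter_upwards [Ioo_mem_nhdsGT ht0] with u hu
  have hρu : 0 ≤ ρ u := hρ0 ▸ hmono self_mem_Ici hu.1.le hu.1.le
  linarith [hslope u ⟨hu.1, hu.2.trans htδ⟩ t ⟨ht0, htδ⟩ hu.2.le]

theorem mul_sub_eq_of_hasDerivAt_comp_abs {ρ : ℝ → ℝ} {a b D : ℝ} (ha : a ≠ 0)
    (hb : |b - a| < |a|) (hρ : DifferentiableAt ℝ ρ |a|)
    (hD : HasDerivAt (fun s => ρ |s|) D a) :
    D * (b - a) = deriv ρ |a| * (|b| - |a|) := by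
  rw [hD.unique (hρ.hasDerivAt.comp a (hasDerivAt_abs ha)), mul_assoc]
  congr 1
  rw [abs_lt] at hb
  rcases ha.lt_or_gt with ha | ha
  · rw [abs_of_neg ha] at hb
    rw [sign_neg ha, SignType.coe_neg, SignType.coe_one, abs_of_neg ha,
      abs_of_neg (by linarith : b < 0)]
    ring
  · rw [abs_of_pos ha] at hb
    rw [sign_pos ha, SignType.coe_one, abs_of_pos ha, abs_of_pos (by linarith : 0 < b)]
    ring

theorem neg_mul_sq_le_sub_mul {f : ℝ → ℝ} {a r κ : ℝ}
    (h : ∀ u v, u ∈ Ioo (a - r) (a + r) → v ∈ Ioo (a - r) (a + r) → u ≤ v →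
      f u - f v ≤ κ * (v - u))
    {e : ℝ} (he : |e| < r) : -(κ * e ^ 2) ≤ (f (a + e) - f a) * e := by
  obtain ⟨he₁, he₂⟩ := abs_lt.1 he
  have ha : a ∈ Ioo (a - r) (a + r) := ⟨by linarith, by linarith⟩
  have hae : a + e ∈ Ioo (a - r) (a + r) := ⟨by linarith, by linarith⟩
  rcases le_total 0 e with he0 | he0
  · nlinarith [h a (a + e) ha hae (by linarith)]
  · nlinarith [h (a + e) a hae ha (by linarith)]

theorem neg_mul_le_mul_sq_of_interpolate {ρ : ℝ → ℝ} {κ r a b τ : ℝ} (hκ : 0 ≤ κ)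
    (hcurv : ∀ u v, u ∈ Ioo (|a| - r) (|a| + r) → v ∈ Ioo (|a| - r) (|a| + r) → u ≤ v →
      deriv ρ u - deriv ρ v ≤ κ * (v - u))
    (hab : |b - a| < r) (hτ : τ ∈ Ioc (0 : ℝ) 1) :
    -((deriv ρ (|a| + τ * (|b| - |a|)) - deriv ρ |a|) * (τ * (|b| - |a|)))
      ≤ κ * (τ * (b - a)) ^ 2 := by
  have he : |τ * (|b| - |a|)| ≤ |τ * (b - a)| := by
    rw [abs_mul, abs_mul]
    exact mul_le_mul_of_nonneg_left (abs_abs_sub_abs_le_abs_sub b a) (abs_nonneg τ)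
  have hr : |τ * (b - a)| < r := by
    rw [abs_mul, abs_of_pos hτ.1]
    exact (mul_le_of_le_one_left (abs_nonneg _) hτ.2).trans_lt hab
  nlinarith [neg_mul_sq_le_sub_mul hcurv (he.trans_lt hr),
    mul_le_mul_of_nonneg_left (sq_le_sq.2 he) hκ]

theorem hasDerivAt_comp_add_mul {ρ : ℝ → ℝ} (hdiff : ∀ x : ℝ, 0 < x → DifferentiableAt ℝ ρ x)
    {a b t : ℝ} (hab : a = b ∨ 0 < a ∧ 0 < b) (ht : t ∈ Icc (0 : ℝ) 1) :
    HasDerivAt (fun t => ρ (a + t * (b - a))) (deriv ρ (a + t * (b - a)) * (b - a)) t := by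
  rcases hab with rfl | ⟨ha, hb⟩
  · simpa using hasDerivAt_const t (ρ a)
  · have hpos : 0 < a + t * (b - a) := by
      rcases ht.2.lt_or_eq with ht1 | rfl
      · nlinarith [mul_pos (sub_pos.2 ht1) ha, mul_nonneg ht.1 hb.le]
      · simpa using hb
    have hlin : HasDerivAt (fun t => a + t * (b - a)) (b - a) t := by
      simpa using ((hasDerivAt_id t).mul_const (b - a)).const_add a
    exact (hdiff _ hpos).hasDerivAt.comp t hlin

theorem exists_fderiv_sub_le {E : Type*} [NormedAddCommGroup E] [NormedSpace ℝ E]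
    {f : E → ℝ} (hf : ContDiff ℝ 2 f) (x : E) {ε : ℝ} (hε : 0 < ε) :
    ∃ δ > 0, ∀ w : E, ‖w‖ < δ →
      fderiv ℝ f (x + w) w - fderiv ℝ f x w ≤ fderiv ℝ (fderiv ℝ f) x w w + ε * ‖w‖ ^ 2 := by
  have hf1 : ContDiff ℝ 1 (fderiv ℝ f) := hf.fderiv_right (by norm_num)
  set f'' := fderiv ℝ (fderiv ℝ f)
  obtain ⟨δ, hδ, hball⟩ := Metric.continuousAt_iff.1
    (hf1.continuous_fderiv one_ne_zero).continuousAt ε hε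
  refine ⟨δ, hδ, fun w hw => ?_⟩
  have hxw : x + w ∈ Metric.ball x δ := by simpa using hw
  obtain ⟨z, hz, hmvt⟩ := domain_mvt (f := fun y => fderiv ℝ f y w)
    (f' := fun y => (f'' y).flip w)
    (fun y _ => by
      simpa using ((hf1.differentiable one_ne_zero y).hasFDerivAt.clm_apply
        (hasFDerivAt_const w y)).hasFDerivWithinAt)
    (convex_ball x δ) (Metric.mem_ball_self hδ) hxw
  have hzx : ‖f'' z - f'' x‖ < ε := by
    simpa [dist_eq_norm] using hball ((convex_ball x δ).segment_subset
      (Metric.mem_ball_self hδ) hxw hz)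
  calc fderiv ℝ f (x + w) w - fderiv ℝ f x w = f'' x w w + (f'' z - f'' x) w w := by
        simp [hmvt]
    _ ≤ f'' x w w + ‖f'' z - f'' x‖ * ‖w‖ * ‖w‖ := by
        gcongr
        exact (le_abs_self _).trans ((f'' z - f'' x).le_opNorm₂ w w)
    _ ≤ f'' x w w + ε * ‖w‖ ^ 2 := by
        rw [mul_assoc, ← sq]; gcongr

section Coordinates

variable {ι : Type*} [Fintype ι]

theorem sq_norm_le_sum_sq (w : ι → ℝ) : ‖w‖ ^ 2 ≤ ∑ j, w j ^ 2 := by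
  have hsum : 0 ≤ ∑ j, w j ^ 2 := Finset.sum_nonneg fun j _ => sq_nonneg _
  have : ‖w‖ ≤ √(∑ j, w j ^ 2) := (pi_norm_le_iff_of_nonneg (Real.sqrt_nonneg _)).2 fun j =>
    Real.abs_le_sqrt (Finset.single_le_sum (fun j _ => sq_nonneg (w j)) (Finset.mem_univ j))
  simpa [Real.sq_sqrt hsum] using pow_le_pow_left₀ (norm_nonneg w) this 2

theorem dist_indicator_le {S : Set ι} {x : ι → ℝ} (hx : ∀ j ∉ S, x j = 0) (β : ι → ℝ) :
    dist (S.indicator β) x ≤ dist β x := by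
  refine (dist_pi_le_iff dist_nonneg).2 fun j => ?_
  by_cases hj : j ∈ S
  · simpa [hj] using dist_le_pi_dist β x j
  · simp [hj, hx j hj]

def penalizedObjective (L : (ι → ℝ) → ℝ) (θ : ℝ) (ρ : ℝ → ℝ) (β : ι → ℝ) : ℝ :=
  L β - ∑ j, θ * ρ |β j|

theorem exists_fderiv_sub_le_neg_sum_sq {L : (ι → ℝ) → ℝ} (hL : ContDiff ℝ 2 L)
    {S : Set ι} {x : ι → ℝ} {lam μ : ℝ} (hμ : μ < lam)
    (hhess : ∀ v : ι → ℝ, (∀ j ∉ S, v j = 0) →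
      fderiv ℝ (fderiv ℝ L) x v v ≤ -lam * ∑ j, v j ^ 2) :
    ∃ δ > 0, ∀ w : ι → ℝ, (∀ j ∉ S, w j = 0) → ‖w‖ < δ →
      fderiv ℝ L (x + w) w - fderiv ℝ L x w ≤ -μ * ∑ j, w j ^ 2 := by
  obtain ⟨δ, hδ, hsmooth⟩ := exists_fderiv_sub_le hL x (sub_pos.2 hμ)
  refine ⟨δ, hδ, fun w hw hwδ => ?_⟩
  have := mul_le_mul_of_nonneg_left (sq_norm_le_sum_sq w) (sub_pos.2 hμ).le
  linarith [hsmooth w hwδ, hhess w hw]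

theorem hasDerivAt_interpolate {L : (ι → ℝ) → ℝ} (hL : Differentiable ℝ L) {θ : ℝ} {ρ : ℝ → ℝ}
    (hdiff : ∀ x : ℝ, 0 < x → DifferentiableAt ℝ ρ x) {x β : ι → ℝ}
    (hxβ : ∀ j, |x j| = |β j| ∨ 0 < |x j| ∧ 0 < |β j|) {t : ℝ} (ht : t ∈ Icc (0 : ℝ) 1) :
    HasDerivAt (fun t => L (x + t • (β - x)) - ∑ j, θ * ρ (|x j| + t * (|β j| - |x j|)))
      (fderiv ℝ L (x + t • (β - x)) (β - x)
        - ∑ j, θ * (deriv ρ (|x j| + t * (|β j| - |x j|)) * (|β j| - |x j|))) t := by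
  have hline : HasDerivAt (fun t : ℝ => x + t • (β - x)) (β - x) t := by
    simpa using ((hasDerivAt_id t).smul_const (β - x)).const_add x
  exact ((hL _).hasFDerivAt.comp_hasDerivAt t hline).sub
    (HasDerivAt.fun_sum fun j _ => (hasDerivAt_comp_add_mul hdiff (hxβ j) ht).const_mul θ)

theorem fderiv_sub_sum_deriv_penalty_neg {L : (ι → ℝ) → ℝ} {θ κ μ r : ℝ} {ρ : ℝ → ℝ}
    (hθ : 0 < θ) (hκ : 0 ≤ κ) (hμ : θ * κ < μ) {S : Set ι} {x β : ι → ℝ}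
    (hcurv : ∀ j ∈ S, ∀ a b : ℝ, a ∈ Ioo (|x j| - r) (|x j| + r) →
      b ∈ Ioo (|x j| - r) (|x j| + r) → a ≤ b → deriv ρ a - deriv ρ b ≤ κ * (b - a))
    (hS : ∀ j ∉ S, |β j| = |x j|) (hr : ∀ j ∈ S, |β j - x j| < r) (hne : β ≠ x)
    (hfoc : fderiv ℝ L x (β - x) = ∑ j, θ * (deriv ρ |x j| * (|β j| - |x j|)))
    {τ : ℝ} (hτ : τ ∈ Ioc (0 : ℝ) 1)
    (hgrad : fderiv ℝ L (x + τ • (β - x)) (τ • (β - x)) - fderiv ℝ L x (τ • (β - x))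
      ≤ -μ * ∑ j, (τ * (β j - x j)) ^ 2) :
    fderiv ℝ L (x + τ • (β - x)) (β - x)
      - ∑ j, θ * (deriv ρ (|x j| + τ * (|β j| - |x j|)) * (|β j| - |x j|)) < 0 := by
  set d : ι → ℝ := fun j => |β j| - |x j|
  set Q := ∑ j, (τ * (β j - x j)) ^ 2
  have hQ : 0 < Q := by
    obtain ⟨j, hj⟩ := Function.ne_iff.1 (sub_ne_zero.2 hne)
    exact Finset.sum_pos' (fun j _ => sq_nonneg _)
      ⟨j, Finset.mem_univ j, pow_pos (abs_pos.2 (mul_ne_zero hτ.1.ne' hj)) 2 |>.trans_eq (sq_abs _)⟩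
  have hcurv_sum : -∑ j, θ * ((deriv ρ (|x j| + τ * d j) - deriv ρ |x j|) * (τ * d j))
      ≤ θ * κ * Q := by
    rw [Finset.mul_sum, ← Finset.sum_neg_distrib]
    refine Finset.sum_le_sum fun j _ => ?_
    by_cases hj : j ∈ S
    · nlinarith [neg_mul_le_mul_sq_of_interpolate hκ (hcurv j hj) (hr j hj) hτ]
    · simp only [d, hS j hj, sub_self, mul_zero, neg_zero]
      positivity
  have hexpand : τ * (fderiv ℝ L (x + τ • (β - x)) (β - x)
        - ∑ j, θ * (deriv ρ (|x j| + τ * d j) * d j))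
      = (fderiv ℝ L (x + τ • (β - x)) (τ • (β - x)) - fderiv ℝ L x (τ • (β - x)))
        - ∑ j, θ * ((deriv ρ (|x j| + τ * d j) - deriv ρ |x j|) * (τ * d j)) := by
    simp only [d, map_smul, hfoc, smul_eq_mul]
    rw [mul_sub, Finset.mul_sum, Finset.mul_sum, sub_sub, ← Finset.sum_add_distrib]
    congr 1
    exact Finset.sum_congr rfl fun j _ => by ring
  refine neg_of_mul_neg_right ?_ hτ.1.le
  rw [hexpand]
  nlinarith

variable [DecidableEq ι]

theorem ContinuousLinearMap.apply_eq_sum_mul_single (φ : (ι → ℝ) →L[ℝ] ℝ) (v : ι → ℝ) :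
    φ v = ∑ j, v j * φ (Pi.single j 1) := by
  conv_lhs => rw [← Finset.univ_sum_single v]
  rw [map_sum]
  refine Finset.sum_congr rfl fun j _ => ?_
  rw [← smul_eq_mul, ← map_smul, ← Pi.single_smul', smul_eq_mul, mul_one]

theorem hasDerivAt_update_apply {L : (ι → ℝ) → ℝ} {x : ι → ℝ} (hL : DifferentiableAt ℝ L x)
    (j : ι) :
    HasDerivAt (fun t => L (Function.update x j t)) (fderiv ℝ L x (Pi.single j 1)) (x j) := by
  have hL' : HasFDerivAt L (fderiv ℝ L x) (Function.update x j (x j)) := by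
    simpa using hL.hasFDerivAt
  exact hL'.comp_hasDerivAt (x j) (hasDerivAt_update x j (x j))

theorem HasDerivAt.penalty_of_penalizedObjective_update {L : (ι → ℝ) → ℝ} {θ : ℝ} {ρ : ℝ → ℝ}
    {x : ι → ℝ} (hL : DifferentiableAt ℝ L x) {j : ι}
    (h : HasDerivAt (fun t => penalizedObjective L θ ρ (Function.update x j t)) 0 (x j)) :
    HasDerivAt (fun t => θ * ρ |t|) (fderiv ℝ L x (Pi.single j 1)) (x j) := by
  have hsplit : (fun t => θ * ρ |t|) = fun t => L (Function.update x j t) -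
      penalizedObjective L θ ρ (Function.update x j t) - ∑ k ∈ Finset.univ \ {j}, θ * ρ |x k| := by
    funext t
    simp only [penalizedObjective, Function.apply_update (fun _ y => θ * ρ |y|),
      Finset.sum_update_of_mem (Finset.mem_univ j)]
    ring
  rw [hsplit]
  simpa using ((hasDerivAt_update_apply hL j).sub h).sub_const
    (∑ k ∈ Finset.univ \ {j}, θ * ρ |x k|)

theorem penalizedObjective_lt_indicator_of_mvt {L : (ι → ℝ) → ℝ} {θ : ℝ} {ρ : ℝ → ℝ}
    (hρ0 : ρ 0 = 0) {S : Set ι} {β : ι → ℝ} {φ : (ι → ℝ) →L[ℝ] ℝ} {c : ℝ}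
    (hφ : ∀ j ∉ S, |φ (Pi.single j 1)| < c) (hpen : ∀ j ∉ S, c * |β j| ≤ θ * ρ |β j|)
    (hmvt : L β - L (S.indicator β) = φ (β - S.indicator β)) (hne : β ≠ S.indicator β) :
    penalizedObjective L θ ρ β < penalizedObjective L θ ρ (S.indicator β) := by
  set term : ι → ℝ := fun j => (β - S.indicator β) j * φ (Pi.single j 1)
      - θ * (ρ |β j| - ρ |S.indicator β j|)
  have hsum : penalizedObjective L θ ρ β - penalizedObjective L θ ρ (S.indicator β)
      = ∑ j, term j := by
    simp only [penalizedObjective, term, Finset.sum_sub_distrib, ← Finset.mul_sum,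
      ← ContinuousLinearMap.apply_eq_sum_mul_single, ← hmvt]
    ring
  have hterm_mem : ∀ j ∈ S, term j = 0 := fun j hj => by simp [term, hj]
  have hterm : ∀ j ∉ S, term j ≤ (|φ (Pi.single j 1)| - c) * |β j| := fun j hj => by
    have := (le_abs_self _).trans (abs_mul (β j) (φ (Pi.single j 1))).le
    simp only [term, Pi.sub_apply, Set.indicator_of_notMem hj, sub_zero, abs_zero, hρ0]
    nlinarith [hpen j hj]
  obtain ⟨j, hj⟩ := Function.ne_iff.1 hne
  have hjS : j ∉ S := fun hjS => hj (Set.indicator_of_mem hjS β).symm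
  have hβj : β j ≠ 0 := by simpa [Set.indicator_of_notMem hjS] using hj
  have hneg : ∑ j, term j < ∑ _j : ι, (0 : ℝ) := by
    refine Finset.sum_lt_sum (fun k _ => ?_) ⟨j, Finset.mem_univ j, ?_⟩
    · by_cases hk : k ∈ S
      · exact (hterm_mem k hk).le
      · exact (hterm k hk).trans
          (mul_nonpos_of_nonpos_of_nonneg (sub_neg.2 (hφ k hk)).le (abs_nonneg _))
    · exact (hterm j hjS).trans_lt (mul_neg_of_neg_of_pos (sub_neg.2 (hφ j hjS))
        (abs_pos.2 hβj))
  rw [Finset.sum_const_zero] at hneg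
  linarith

theorem eventually_penalizedObjective_lt_indicator {L : (ι → ℝ) → ℝ} (hL : ContDiff ℝ 1 L)
    {θ : ℝ} (hθ : 0 < θ) {ρ : ℝ → ℝ} (hρ0 : ρ 0 = 0) (hmono : MonotoneOn ρ (Ici 0))
    (hdiff : ∀ x : ℝ, 0 < x → DifferentiableAt ℝ ρ x)
    {ρ0' : ℝ} (hρ0' : Tendsto (deriv ρ) (𝓝[>] 0) (𝓝 ρ0')) {S : Set ι} {x : ι → ℝ}
    (hx : ∀ j ∉ S, x j = 0) (hdual : ∀ j ∉ S, |fderiv ℝ L x (Pi.single j 1)| < θ * ρ0') :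
    ∀ᶠ β in 𝓝 x, β ≠ S.indicator β →
      penalizedObjective L θ ρ β < penalizedObjective L θ ρ (S.indicator β) := by
  obtain ⟨c, hdual_c, hc⟩ : ∃ c, (∀ j ∉ S, |fderiv ℝ L x (Pi.single j 1)| < c) ∧ c < θ * ρ0' :=
    ((eventually_all.2 fun j => eventually_imp_distrib_left.2 fun hj =>
      (eventually_gt_nhds (hdual j hj)).filter_mono nhdsWithin_le_nhds).and
        (self_mem_nhdsWithin : ∀ᶠ c in 𝓝[<] (θ * ρ0'), c < θ * ρ0')).exists
  have hpen : ∀ᶠ t in 𝓝[≥] 0, c / θ * t ≤ ρ t :=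
    eventually_mul_le_of_tendsto_deriv hρ0 hmono hdiff hρ0' (by rwa [div_lt_iff₀' hθ])
  have hpartial : ∀ j, Continuous fun ξ => fderiv ℝ L ξ (Pi.single j 1) := fun j =>
    (hL.continuous_fderiv one_ne_zero).clm_apply continuous_const
  obtain ⟨ε, hε, hball⟩ := Metric.eventually_nhds_iff_ball.1 <| eventually_all.2 fun j =>
    eventually_imp_distrib_left.2 fun hj =>
      (hpartial j).abs.continuousAt.eventually_lt continuousAt_const (hdual_c j hj)
  have hcoord : ∀ j, Tendsto (fun β : ι → ℝ => |β j - x j|) (𝓝 x) (𝓝[≥] 0) := fun j =>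
    tendsto_nhdsWithin_of_tendsto_nhds_of_eventually_within _
      (by simpa using ((continuous_apply j).sub (continuous_const (y := x j))).abs.tendsto x)
      (.of_forall fun _ => mem_Ici.2 (abs_nonneg _))
  filter_upwards [Metric.ball_mem_nhds x hε, eventually_all.2 fun j => (hcoord j).eventually hpen]
    with β hβ hβpen hne
  have hIβ : S.indicator β ∈ Metric.ball x ε := (dist_indicator_le hx β).trans_lt hβ
  obtain ⟨ξ, hξ, hmvt⟩ := domain_mvt
    (fun y _ => (hL.differentiable one_ne_zero y).hasFDerivAt.hasFDerivWithinAt)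
    (convex_ball x ε) hIβ hβ
  refine penalizedObjective_lt_indicator_of_mvt hρ0
    (hball ξ ((convex_ball x ε).segment_subset hIβ hβ hξ)) (fun j hj => ?_) hmvt hne
  have := mul_le_mul_of_nonneg_left (hβpen j) hθ.le
  rwa [hx j hj, sub_zero, ← mul_assoc, mul_div_cancel₀ _ hθ.ne'] at this

theorem apply_sub_eq_sum_deriv_penalty {θ : ℝ} {ρ : ℝ → ℝ}
    (hdiff : ∀ x : ℝ, 0 < x → DifferentiableAt ℝ ρ x) {S : Set ι} {x β : ι → ℝ}
    (hx0 : ∀ j ∉ S, x j = 0) (hβ0 : ∀ j ∉ S, β j = 0) (hxS : ∀ j ∈ S, x j ≠ 0)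
    (hβS : ∀ j ∈ S, |β j - x j| < |x j|) {φ : (ι → ℝ) →L[ℝ] ℝ}
    (hfoc : ∀ j ∈ S, HasDerivAt (fun t => θ * ρ |t|) (φ (Pi.single j 1)) (x j)) :
    φ (β - x) = ∑ j, θ * (deriv ρ |x j| * (|β j| - |x j|)) := by
  rw [ContinuousLinearMap.apply_eq_sum_mul_single]
  refine Finset.sum_congr rfl fun j _ => ?_
  by_cases hj : j ∈ S
  · have hρj := hdiff _ (abs_pos.2 (hxS j hj))
    have := mul_sub_eq_of_hasDerivAt_comp_abs (hxS j hj) (hβS j hj) (hρj.const_mul θ) (hfoc j hj)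
    rw [deriv_const_mul _ hρj] at this
    simp only [Pi.sub_apply]
    linarith
  · simp [hx0 j hj, hβ0 j hj]

theorem eventually_penalizedObjective_lt_of_support {L : (ι → ℝ) → ℝ} (hL : ContDiff ℝ 2 L)
    {θ : ℝ} (hθ : 0 < θ) {ρ : ℝ → ℝ} (hdiff : ∀ x : ℝ, 0 < x → DifferentiableAt ℝ ρ x)
    {S : Set ι} {x : ι → ℝ} (hx0 : ∀ j ∉ S, x j = 0) (hxS : ∀ j ∈ S, x j ≠ 0)
    (hfoc : ∀ j ∈ S, HasDerivAt (fun t => θ * ρ |t|) (fderiv ℝ L x (Pi.single j 1)) (x j))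
    {κ r lam : ℝ} (hκ : 0 ≤ κ) (hr : 0 < r)
    (hcurv : ∀ j ∈ S, ∀ a b : ℝ, a ∈ Ioo (|x j| - r) (|x j| + r) →
      b ∈ Ioo (|x j| - r) (|x j| + r) → a ≤ b → deriv ρ a - deriv ρ b ≤ κ * (b - a))
    (hlam : θ * κ < lam)
    (hhess : ∀ v : ι → ℝ, (∀ j ∉ S, v j = 0) →
      fderiv ℝ (fderiv ℝ L) x v v ≤ -lam * ∑ j, v j ^ 2) :
    ∀ᶠ β in 𝓝 x, (∀ j ∉ S, β j = 0) → β ≠ x →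
      penalizedObjective L θ ρ β < penalizedObjective L θ ρ x := by
  obtain ⟨δ, hδ, hgrad⟩ := exists_fderiv_sub_le_neg_sum_sq hL (μ := (θ * κ + lam) / 2)
    (by linarith) hhess
  have hsign : ∀ᶠ β in 𝓝 x, ∀ j ∈ S, |β j - x j| < |x j| :=
    eventually_all.2 fun j => eventually_imp_distrib_left.2 fun hj =>
      ((continuous_apply j).sub continuous_const).abs.continuousAt.eventually_lt
        continuousAt_const (by simpa using hxS j hj)
  filter_upwards [Metric.ball_mem_nhds x (lt_min hδ hr), hsign] with β hβ hβS hβ0 hne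
  have hβx : ‖β - x‖ < min δ r := by rwa [← dist_eq_norm]
  have hsame : ∀ j ∉ S, β j = x j := fun j hj => by rw [hx0 j hj, hβ0 j hj]
  have hg := fun t (ht : t ∈ Icc (0 : ℝ) 1) =>
    hasDerivAt_interpolate (hL.differentiable two_ne_zero) (θ := θ) hdiff (x := x) (β := β)
      (fun j => by
        by_cases hj : j ∈ S
        · refine .inr ⟨abs_pos.2 (hxS j hj), abs_pos.2 fun h0 => ?_⟩
          simpa [h0] using hβS j hj
        · rw [hsame j hj]
          exact .inl rfl) ht
  have hderiv_neg : ∀ τ ∈ Ioo (0 : ℝ) 1, deriv (fun t => L (x + t • (β - x))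
      - ∑ j, θ * ρ (|x j| + t * (|β j| - |x j|))) τ < 0 := fun τ hτ => by
    have hτδ : ‖τ • (β - x)‖ < δ := by
      rw [norm_smul, Real.norm_of_nonneg hτ.1.le]
      exact (mul_le_of_le_one_left (norm_nonneg _) hτ.2.le).trans_lt
        (hβx.trans_le (min_le_left _ _))
    rw [(hg τ (Ioo_subset_Icc_self hτ)).deriv]
    exact fderiv_sub_sum_deriv_penalty_neg (μ := (θ * κ + lam) / 2) hθ hκ (by linarith) hcurv
      (fun j hj => by rw [hsame j hj])
      (fun j _ => ((norm_le_pi_norm (β - x) j).trans_lt hβx).trans_le (min_le_right _ _))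
      hne (apply_sub_eq_sum_deriv_penalty hdiff hx0 hβ0 hxS hβS hfoc) (Ioo_subset_Ioc_self hτ)
      (by simpa using hgrad _ (fun j hj => by simp [hsame j hj]) hτδ)
  have hanti := strictAntiOn_of_deriv_neg (convex_Icc 0 1)
    (fun t ht => (hg t ht).continuousAt.continuousWithinAt) (by rwa [interior_Icc])
  simpa [penalizedObjective] using
    hanti (left_mem_Icc.2 zero_le_one) (right_mem_Icc.2 zero_le_one) zero_lt_one

end Coordinates

theorem kkt_strict_local_maximizer_general
    (p s : ℕ)
    (L : (Fin p → ℝ) → ℝ) (hL : ContDiff ℝ 2 L)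
    (θ : ℝ) (hθ : 0 < θ)
    (ρ : ℝ → ℝ) (hρ0 : ρ 0 = 0) (hmono : MonotoneOn ρ (Ici 0))
    (hdiff : ∀ x : ℝ, 0 < x → DifferentiableAt ℝ ρ x)
    (ρ0' : ℝ) (hρ0' : Tendsto (deriv ρ) (nhdsWithin 0 (Ioi 0)) (nhds ρ0'))
    (βhat : Fin p → ℝ)
    (hsupp0 : ∀ j : Fin p, s ≤ (j : ℕ) → βhat j = 0)
    (hsuppne : ∀ j : Fin p, (j : ℕ) < s → βhat j ≠ 0)
    (F : (Fin p → ℝ) → ℝ)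
    (hF : F = fun β => L β - ∑ j, θ * ρ (|β j|))
    -- (i) first-order condition on the support
    (hfoc : ∀ j : Fin p, (j : ℕ) < s →
      HasDerivAt (fun t => F (Function.update βhat j t)) 0 (βhat j))
    -- (ii) strict dual-feasibility off the support
    (hineq : ∀ j : Fin p, s ≤ (j : ℕ) →
      |deriv (fun t => L (Function.update βhat j t)) (βhat j)| < θ * ρ0')
    -- (iii) second-order condition: penalty curvature bound and negative definite
    -- restricted Hessian dominating it
    (κ : ℝ) (hκ : 0 ≤ κ) (r : ℝ) (hr : 0 < r)
    (hcurv : ∀ j : Fin p, (j : ℕ) < s → ∀ a b : ℝ,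
      a ∈ Ioo (|βhat j| - r) (|βhat j| + r) →
      b ∈ Ioo (|βhat j| - r) (|βhat j| + r) →
      a ≤ b → deriv ρ a - deriv ρ b ≤ κ * (b - a))
    (lam : ℝ) (hlam : θ * κ < lam)
    (hhess : ∀ v : Fin p → ℝ, (∀ j : Fin p, s ≤ (j : ℕ) → v j = 0) →
      (fderiv ℝ (fderiv ℝ L) βhat v) v ≤ -lam * ∑ j, (v j) ^ 2) :
    ∃ ε : ℝ, 0 < ε ∧ ∀ β : Fin p → ℝ, β ≠ βhat → ‖β - βhat‖ < ε → F β < F βhat := by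
  set S : Set (Fin p) := {j | (j : ℕ) < s}
  have hF' : F = penalizedObjective L θ ρ := hF
  subst hF'
  have hLdiff : Differentiable ℝ L := hL.differentiable two_ne_zero
  have hx0 : ∀ j ∉ S, βhat j = 0 := fun j hj => hsupp0 j (not_lt.1 hj)
  have hoff := eventually_penalizedObjective_lt_indicator (hL.of_le one_le_two) hθ hρ0 hmono
    hdiff hρ0' hx0 fun j hj => (hasDerivAt_update_apply (hLdiff _) j).deriv ▸ hineq j (not_lt.1 hj)
  have hsupp := eventually_penalizedObjective_lt_of_support hL hθ hdiff hx0 hsuppne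
    (fun j hj => (hfoc j hj).penalty_of_penalizedObjective_update (hLdiff _)) hκ hr hcurv hlam
    fun v hv => hhess v fun j hj => hv j (not_lt.2 hj)
  obtain ⟨ε, hε, hball⟩ := Metric.eventually_nhds_iff.1 (hoff.and hsupp)
  refine ⟨ε, hε, fun β hne hβ => ?_⟩
  rw [← dist_eq_norm] at hβ
  have hIβ := (hball ((dist_indicator_le hx0 β).trans_lt hβ)).2 fun j hj => indicator_of_notMem hj β
  by_cases hβI : β = S.indicator β
  · rw [hβI] at hne ⊢
    exact hIβ hne
  · refine ((hball hβ).1 hβI).trans_le ?_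
    rcases eq_or_ne (S.indicator β) βhat with h | h
    · rw [h]
    · exact (hIβ h).le

/-- KKT-type characterization of strict local maximizers of a nonconcave penalized
objective `F(β) = L(β) - ∑ⱼ θ ρ(|βⱼ|)`: if `β̂` is supported on `S = {1, ..., s}`
with (i) vanishing partial derivatives of `F` on `S`, (ii) `|∂ⱼ L(β̂)| < θ ρ'(0+)`
off `S`, and (iii) the Hessian of `L` restricted to `S` is bounded above by
`-λ · id` with `λ > θ κ`, where `κ` bounds the local concavity of the penalty near
the active coefficients, then `β̂` is a strict local maximizer of `F` on `ℝ^p`. -/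
theorem kkt_strict_local_maximizer
    (p s : ℕ) (hsp : s ≤ p)
    (L : (Fin p → ℝ) → ℝ) (hL : ContDiff ℝ 2 L)
    (θ : ℝ) (hθ : 0 < θ)
    (ρ : ℝ → ℝ) (hρ0 : ρ 0 = 0) (hmono : MonotoneOn ρ (Ici 0))
    (hconc : ConcaveOn ℝ (Ici 0) ρ)
    (hdiff : ∀ x : ℝ, 0 < x → DifferentiableAt ℝ ρ x)
    (ρ0' : ℝ) (hρ0' : Tendsto (deriv ρ) (nhdsWithin 0 (Ioi 0)) (nhds ρ0'))
    (βhat : Fin p → ℝ)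
    (hsupp0 : ∀ j : Fin p, s ≤ (j : ℕ) → βhat j = 0)
    (hsuppne : ∀ j : Fin p, (j : ℕ) < s → βhat j ≠ 0)
    (F : (Fin p → ℝ) → ℝ)
    (hF : F = fun β => L β - ∑ j, θ * ρ (|β j|))
    -- (i) first-order condition on the support
    (hfoc : ∀ j : Fin p, (j : ℕ) < s →
      HasDerivAt (fun t => F (Function.update βhat j t)) 0 (βhat j))
    -- (ii) strict dual-feasibility off the support
    (hineq : ∀ j : Fin p, s ≤ (j : ℕ) →
      |deriv (fun t => L (Function.update βhat j t)) (βhat j)| < θ * ρ0')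
    -- (iii) second-order condition: penalty curvature bound and negative definite
    -- restricted Hessian dominating it
    (κ : ℝ) (hκ : 0 ≤ κ) (r : ℝ) (hr : 0 < r)
    (hcurv : ∀ j : Fin p, (j : ℕ) < s → ∀ a b : ℝ,
      a ∈ Ioo (|βhat j| - r) (|βhat j| + r) →
      b ∈ Ioo (|βhat j| - r) (|βhat j| + r) →
      a ≤ b → deriv ρ a - deriv ρ b ≤ κ * (b - a))
    (lam : ℝ) (hlam : θ * κ < lam)
    (hhess : ∀ v : Fin p → ℝ, (∀ j : Fin p, s ≤ (j : ℕ) → v j = 0) →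
      (fderiv ℝ (fderiv ℝ L) βhat v) v ≤ -lam * ∑ j, (v j) ^ 2) :
    ∃ ε : ℝ, 0 < ε ∧ ∀ β : Fin p → ℝ, β ≠ βhat → ‖β - βhat‖ < ε → F β < F βhat :=
  kkt_strict_local_maximizer_general p s L hL θ hθ ρ hρ0 hmono hdiff ρ0' hρ0' βhat hsupp0 hsuppne F
    hF hfoc hineq κ hκ r hr hcurv lam hlam hhess
end
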